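/- Suppose the matrices M_1,…,M_r satisfy conditions (H1a), (H1b) and (H1c). Let 1 ≤ j_1,…,j_p ≤ r and let a_0,…,a_p ∈ A satisfy M_{j_i}(a_i, a_{i−1}) = 1 for 1 ≤ i ≤ p. Then there exists a unique word w ∈ W with σ(w) = e_{j_1}+⋯+e_{j_p}, such that w(0) = a_0 and w(e_{j_1}+⋯+e_{j_i}) = a_i for 1 ≤ i ≤ p. -/

import Mathlib

open Matrix

variable {r : ℕ} {A : Type*}

/-- The `j`-th standard basis vector of `ℤ^r`. -/
def evec (r : ℕ) (j : Fin r) : Fin r → ℤ := fun i => if i = j then 1 else 0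

/-- `w` represents a word of shape `m` (only its values on `[0,m]` matter):
`m ≥ 0` and the transition matrices are respected on the box `[0,m]`. -/
def IsWord (M : Fin r → Matrix A A ℤ) (m : Fin r → ℤ) (w : (Fin r → ℤ) → A) : Prop :=
  0 ≤ m ∧ ∀ (l : Fin r → ℤ) (j : Fin r), 0 ≤ l → l + evec r j ≤ m →
    M j (w (l + evec r j)) (w l) = 1

/-- Two representing functions agree on the box `[0,m]`; this is equality of
words of shape `m`. -/
def AgreeOn (m : Fin r → ℤ) (w w' : (Fin r → ℤ) → A) : Prop :=
  ∀ l : Fin r → ℤ, 0 ≤ l → l ≤ m → w l = w' l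

/-- The restriction `w|[k,k+n]`, as a word based at `0`: `(restrictW k w) i = w (i + k)`. -/
def restrictW (k : Fin r → ℤ) (w : (Fin r → ℤ) → A) : (Fin r → ℤ) → A :=
  fun i => w (i + k)

/-- `w` (a word of shape `m`) is `p`-periodic: the translate `τ_p w`, given by
`(τ_p w)(x) = w (x - p)`, agrees with `w` on `[0,m] ∩ [p,p+m]`. -/
def IsPeriodic (p m : Fin r → ℤ) (w : (Fin r → ℤ) → A) : Prop :=
  ∀ x : Fin r → ℤ, 0 ≤ x → x ≤ m → p ≤ x → x ≤ p + m → w (x - p) = w x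

/-- Condition (H0): each `M j` is nonzero. -/
def H0 (M : Fin r → Matrix A A ℤ) : Prop := ∀ j, M j ≠ 0

/-- Condition (H1): unique products of words. -/
def H1 (M : Fin r → Matrix A A ℤ) : Prop :=
  ∀ (m n : Fin r → ℤ) (u v : (Fin r → ℤ) → A),
    IsWord M m u → IsWord M n v → u m = v 0 →
      (∃ w, IsWord M (m + n) w ∧ AgreeOn m w u ∧ AgreeOn n (restrictW m w) v) ∧
      (∀ w w', IsWord M (m + n) w → AgreeOn m w u → AgreeOn n (restrictW m w) v →
        IsWord M (m + n) w' → AgreeOn m w' u → AgreeOn n (restrictW m w') v →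
        AgreeOn (m + n) w w')

/-- Condition (H2): the directed graph on `A` with an edge `a → b` whenever
`M i b a = 1` for some `i` is irreducible. -/
def H2 (M : Fin r → Matrix A A ℤ) : Prop :=
  ∀ a b : A, Relation.ReflTransGen (fun x y => ∃ i, M i y x = 1) a b

/-- Condition (H3): for each nonzero `p ∈ ℤ^r` there is a non-`p`-periodic word. -/
def H3 (M : Fin r → Matrix A A ℤ) : Prop :=
  ∀ p : Fin r → ℤ, p ≠ 0 → ∃ (m : Fin r → ℤ) (w : (Fin r → ℤ) → A),
    IsWord M m w ∧ ¬ IsPeriodic p m w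

/-- Condition (H1a): the matrices commute. -/
def H1a [Fintype A] (M : Fin r → Matrix A A ℤ) : Prop :=
  ∀ i j, M i * M j = M j * M i

/-- Condition (H1b): for `i < j`, the entries of `M i * M j` lie in `{0,1}`. -/
def H1b [Fintype A] (M : Fin r → Matrix A A ℤ) : Prop :=
  ∀ i j, i < j → ∀ a b : A, (M i * M j) b a = 0 ∨ (M i * M j) b a = 1

/-- Condition (H1c): for `i < j < k`, the entries of `M i * M j * M k` lie in `{0,1}`. -/
def H1c [Fintype A] (M : Fin r → Matrix A A ℤ) : Prop :=
  ∀ i j k, i < j → j < k → ∀ a b : A,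
    (M i * M j * M k) b a = 0 ∨ (M i * M j * M k) b a = 1

/-- Condition (H3*). -/
def H3star (M : Fin r → Matrix A A ℤ) : Prop :=
  ∀ (j : Fin r) (m : Fin r → ℤ), m j = 0 → ∀ w : (Fin r → ℤ) → A, IsWord M m w →
    ∃ u u', IsWord M (m + evec r j) u ∧ IsWord M (m + evec r j) u' ∧
      AgreeOn m u w ∧ AgreeOn m u' w ∧ u (evec r j) ≠ u' (evec r j)

/-- `x` represents the product word `uv` of `u ∈ W_m` and `v ∈ W_n`. -/
def IsProd (M : Fin r → Matrix A A ℤ) (m n : Fin r → ℤ)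
    (u v x : (Fin r → ℤ) → A) : Prop :=
  IsWord M (m + n) x ∧ AgreeOn m x u ∧ AgreeOn n (restrictW m x) v


/-!
Under (H1a), a path `a →ᵢ b →ₖ c` (an edge `x →ⱼ y` meaning `M j y x = 1`) can be completed
to a square `a →ₖ d →ᵢ c`, and by (H1b) the corner `d` is unique when `i ≠ k`; (H1c) makes
the three squares around a corner of a cube close up consistently. So a word `u` of shape `n`
together with an edge `u n →ₖ t` extends uniquely to a word of shape `n + e_k` ending at `t`:
the new top face is filled downward from `t`, one square at a time, and the cube condition
makes the result independent of the order of filling. Adding the steps `e_{j_1}, …, e_{j_p}`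
of the staircase one at a time gives the theorem.
-/

lemma evec_nonneg (j : Fin r) : 0 ≤ evec r j := by
  intro i; simp only [evec, Pi.zero_apply]; split_ifs <;> omega

lemma add_evec_apply (l : Fin r → ℤ) (d i : Fin r) :
    (l + evec r d) i = if i = d then l i + 1 else l i := by
  simp only [Pi.add_apply, evec]; split_ifs <;> omega

lemma add_evec_apply_self (l : Fin r → ℤ) (d : Fin r) : (l + evec r d) d = l d + 1 := by
  rw [add_evec_apply, if_pos rfl]

lemma add_evec_apply_of_ne (l : Fin r → ℤ) {d i : Fin r} (h : i ≠ d) :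
    (l + evec r d) i = l i := by
  rw [add_evec_apply, if_neg h]

lemma sub_evec_apply (l : Fin r → ℤ) (d i : Fin r) :
    (l - evec r d) i = if i = d then l i - 1 else l i := by
  simp only [Pi.sub_apply, evec]; split_ifs <;> omega

lemma add_evec_le {l m : Fin r → ℤ} {d : Fin r} (hl : l ≤ m) (hd : l d < m d) :
    l + evec r d ≤ m := fun i => by
  show (l + evec r d) i ≤ m i
  rw [add_evec_apply]
  split_ifs with h
  · subst h; omega
  · exact hl i

lemma sub_evec_nonneg {l : Fin r → ℤ} {k : Fin r} (hl : 0 ≤ l) (hk : 0 < l k) :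
    0 ≤ l - evec r k := fun i => by
  have h0 : (0 : ℤ) ≤ l i := hl i
  show (0 : ℤ) ≤ (l - evec r k) i
  rw [sub_evec_apply]
  split_ifs with h
  · subst h; omega
  · exact h0

lemma le_of_le_add_evec {l n : Fin r → ℤ} {k : Fin r} (hl : l ≤ n + evec r k)
    (hk : l k ≠ n k + 1) : l ≤ n := fun i => by
  have h1 : l i ≤ (n + evec r k) i := hl i
  show l i ≤ n i
  rw [add_evec_apply] at h1
  split_ifs at h1 with h
  · subst h; omega
  · exact h1

lemma ne_of_lt_add_evec {l n : Fin r → ℤ} {d k : Fin r} (hlk : l k = n k + 1)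
    (hd : l d < (n + evec r k) d) : d ≠ k := by
  rintro rfl
  rw [add_evec_apply_self] at hd
  omega

lemma eq_of_le_of_not_exists_lt {l m : Fin r → ℤ} (hl : l ≤ m) (h : ¬∃ d, l d < m d) :
    l = m :=
  le_antisymm hl fun d => not_lt.1 (not_exists.1 h d)

def stepsTo (m l : Fin r → ℤ) : ℕ := ∑ d, (m d - l d).toNat

lemma stepsTo_add_evec_lt {m l : Fin r → ℤ} {d : Fin r} (h : l d < m d) :
    stepsTo m (l + evec r d) < stepsTo m l := by
  refine Finset.sum_lt_sum (fun i _ => ?_) ⟨d, Finset.mem_univ d, ?_⟩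
  · rw [add_evec_apply]; split_ifs <;> omega
  · rw [add_evec_apply_self]; omega

lemma IsWord.mono {M : Fin r → Matrix A A ℤ} {m m' : Fin r → ℤ} {w : (Fin r → ℤ) → A}
    (hw : IsWord M m w) (hm' : 0 ≤ m') (hle : m' ≤ m) : IsWord M m' w :=
  ⟨hm', fun l d hl₀ hl => hw.2 l d hl₀ (hl.trans hle)⟩

lemma isWord_zero (M : Fin r → Matrix A A ℤ) (w : (Fin r → ℤ) → A) : IsWord M 0 w := by
  refine ⟨le_rfl, fun l d hl₀ hl => absurd (hl d) ?_⟩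
  have : (0 : ℤ) ≤ l d := hl₀ d
  simp only [add_evec_apply_self, Pi.zero_apply]
  omega

namespace Matrix

variable {l m n : Type*} [Fintype m] {X : Matrix l m ℤ} {Y : Matrix m n ℤ}

lemma mul_apply_pos_iff_of_nonneg (hX : ∀ c b, 0 ≤ X c b) (hY : ∀ b a, 0 ≤ Y b a)
    {a : n} {c : l} : 0 < (X * Y) c a ↔ ∃ b, 0 < Y b a ∧ 0 < X c b := by
  rw [mul_apply, Finset.sum_pos_iff_of_nonneg fun b _ => mul_nonneg (hX c b) (hY b a)]
  simp only [Finset.mem_univ, true_and]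
  refine exists_congr fun b => ⟨fun h => ?_, fun ⟨hb, hc⟩ => mul_pos hc hb⟩
  exact ⟨pos_of_mul_pos_right h (hX c b), pos_of_mul_pos_left h (hY b a)⟩

lemma eq_of_mul_apply_le_one (hX : ∀ c b, 0 ≤ X c b) (hY : ∀ b a, 0 ≤ Y b a)
    {a : n} {c : l} {b b' : m} (h : (X * Y) c a ≤ 1)
    (hb : 0 < Y b a ∧ 0 < X c b) (hb' : 0 < Y b' a ∧ 0 < X c b') : b = b' := by
  by_contra hne
  have := Finset.add_le_sum (f := fun b => X c b * Y b a)
    (fun b _ => mul_nonneg (hX c b) (hY b a)) (Finset.mem_univ b) (Finset.mem_univ b') hne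
  rw [← mul_apply] at this
  nlinarith [mul_pos hb.2 hb.1, mul_pos hb'.2 hb'.1]

end Matrix

section ZeroOne

variable {M : Fin r → Matrix A A ℤ} (hM : ∀ j (a b : A), M j b a = 0 ∨ M j b a = 1)
include hM

lemma entry_nonneg (j : Fin r) (b a : A) : 0 ≤ M j b a := by
  rcases hM j a b with h | h <;> omega

lemma entry_eq_one_iff {j : Fin r} {b a : A} : M j b a = 1 ↔ 0 < M j b a := by
  rcases hM j a b with h | h <;> omega

end ZeroOne

section Squares

variable [Fintype A] {M : Fin r → Matrix A A ℤ}

lemma mul_apply_le_one_of_ne (h1a : H1a M) (h1b : H1b M) {i k : Fin r} (hik : i ≠ k)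
    (a b : A) : (M i * M k) b a ≤ 1 := by
  rcases hik.lt_or_gt with h | h
  · rcases h1b i k h a b with h' | h' <;> omega
  · rw [h1a i k]; rcases h1b k i h a b with h' | h' <;> omega

lemma mul_mul_apply_le_one (h1a : H1a M) (h1c : H1c M) {x y z : Fin r}
    (hxy : x ≠ y) (hyz : y ≠ z) (hxz : x ≠ z) (a b : A) :
    (M x * M y * M z) b a ≤ 1 := by
  let P : Fin r → Fin r → Fin r → Prop := fun x y z => ∀ a b, (M x * M y * M z) b a ≤ 1
  have sorted : ∀ {x y z}, x < y → y < z → P x y z := fun hxy hyz a b => by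
    rcases h1c _ _ _ hxy hyz a b with h | h <;> omega
  have swap₁₂ : ∀ {x y z}, P x y z → P y x z := fun h => by
    simpa only [P, h1a _ _] using h
  have swap₂₃ : ∀ {x y z}, P x y z → P x z y := fun h => by
    simpa only [P, mul_assoc, h1a _ _] using h
  revert a b
  rcases hxy.lt_or_gt with h₁ | h₁ <;> rcases hyz.lt_or_gt with h₂ | h₂ <;>
    rcases hxz.lt_or_gt with h₃ | h₃
  all_goals first
    | exact sorted h₁ h₂
    | exact swap₂₃ (sorted h₃ h₂)
    | exact swap₁₂ (sorted h₁ h₃)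
    | exact swap₁₂ (swap₂₃ (sorted h₂ h₃))
    | exact swap₂₃ (swap₁₂ (sorted h₃ h₁))
    | exact swap₂₃ (swap₁₂ (swap₂₃ (sorted h₂ h₁)))

variable (hM : ∀ j (a b : A), M j b a = 0 ∨ M j b a = 1)
include hM

lemma exists_square (h1a : H1a M) {i k : Fin r} {a b c : A}
    (hab : M i b a = 1) (hbc : M k c b = 1) : ∃ d, M k d a = 1 ∧ M i c d = 1 := by
  have nn := entry_nonneg hM
  simp only [entry_eq_one_iff hM] at hab hbc ⊢
  rw [← Matrix.mul_apply_pos_iff_of_nonneg (nn i) (nn k), h1a i k,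
    Matrix.mul_apply_pos_iff_of_nonneg (nn k) (nn i)]
  exact ⟨b, hab, hbc⟩

lemma square_unique (h1a : H1a M) (h1b : H1b M) {i k : Fin r} (hik : i ≠ k)
    {a c d d' : A} (hd : M k d a = 1 ∧ M i c d = 1) (hd' : M k d' a = 1 ∧ M i c d' = 1) :
    d = d' := by
  have nn := entry_nonneg hM
  simp only [entry_eq_one_iff hM] at hd hd'
  exact Matrix.eq_of_mul_apply_le_one (nn i) (nn k)
    (mul_apply_le_one_of_ne h1a h1b hik a c) hd hd'

lemma edge_of_cube (h1a : H1a M) (h1c : H1c M) {i j k : Fin r}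
    (hij : i ≠ j) (hjk : j ≠ k) (hik : i ≠ k) {u₀ uⱼ v₀ vᵢ vⱼ vᵢⱼ : A}
    (h₁ : M k v₀ u₀ = 1) (h₂ : M i vᵢ v₀ = 1) (h₃ : M j vᵢⱼ vᵢ = 1)
    (h₄ : M j uⱼ u₀ = 1) (h₅ : M k vⱼ uⱼ = 1) (h₆ : M i vᵢⱼ vⱼ = 1) :
    M j vⱼ v₀ = 1 := by
  obtain ⟨e, he, he'⟩ := exists_square hM h1a h₂ h₃
  suffices e = vⱼ from this ▸ he
  -- `e` and `vⱼ` are both a `c` with `0 < (M j * M k) c u₀` and `M i vᵢⱼ c = 1`; by (H1c) there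
  -- is only one such `c`
  have nn := entry_nonneg hM
  have nnjk : ∀ c b, 0 ≤ (M j * M k) c b := fun c b => by
    rw [Matrix.mul_apply]; exact Finset.sum_nonneg fun _ _ => mul_nonneg (nn _ _ _) (nn _ _ _)
  simp only [entry_eq_one_iff hM] at h₁ h₄ h₅ h₆ he he'
  refine Matrix.eq_of_mul_apply_le_one (a := u₀) (nn i) nnjk ?_ ⟨?_, he'⟩ ⟨?_, h₆⟩
  · rw [← mul_assoc]; exact mul_mul_apply_le_one h1a h1c hij hjk hik u₀ vᵢⱼ
  · exact (Matrix.mul_apply_pos_iff_of_nonneg (nn j) (nn k)).2 ⟨v₀, h₁, he⟩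
  · rw [h1a j k]; exact (Matrix.mul_apply_pos_iff_of_nonneg (nn k) (nn j)).2 ⟨uⱼ, h₄, h₅⟩

end Squares

/-- The values on the top face `l k = m k` of a word of shape `m` extending `u`, filled downward
from the corner value `t`: the value at `l` completes the square `u (l - e_k) →ₖ · →_d` (value at
`l + e_d`) for some `d` with `l d < m d`; by `edge_of_cube` the choice of `d` does not matter.
The fallback `t` is never reached on the face. -/
noncomputable def faceFill (M : Fin r → Matrix A A ℤ) (k : Fin r) (m : Fin r → ℤ)
    (u : (Fin r → ℤ) → A) (t : A) (l : Fin r → ℤ) : A :=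
  open Classical in
  if h : ∃ d, l d < m d then
    if hc : ∃ c, M k c (u (l - evec r k)) = 1 ∧
        M h.choose (faceFill M k m u t (l + evec r h.choose)) c = 1 then hc.choose else t
  else t
termination_by stepsTo m l
decreasing_by exact stepsTo_add_evec_lt h.choose_spec

lemma faceFill_self (M : Fin r → Matrix A A ℤ) (k : Fin r) (m : Fin r → ℤ)
    (u : (Fin r → ℤ) → A) (t : A) : faceFill M k m u t m = t := by
  rw [faceFill, dif_neg (by simp)]

section Extension

variable [Fintype A] {M : Fin r → Matrix A A ℤ}
  (hM : ∀ j (a b : A), M j b a = 0 ∨ M j b a = 1) (h1a : H1a M)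
include hM h1a

theorem faceFill_spec (h1c : H1c M) {k : Fin r} {n : Fin r → ℤ} {u : (Fin r → ℤ) → A} {t : A}
    (hu : IsWord M n u) (ht : M k t (u n) = 1) (l : Fin r → ℤ) (hl₀ : 0 ≤ l)
    (hl : l ≤ n + evec r k) (hlk : l k = n k + 1) :
    M k (faceFill M k (n + evec r k) u t l) (u (l - evec r k)) = 1 ∧
      ∀ d, l d < (n + evec r k) d →
        M d (faceFill M k (n + evec r k) u t (l + evec r d))
          (faceFill M k (n + evec r k) u t l) = 1 := by
  set w := faceFill M k (n + evec r k) u t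
  have hne : ∀ d, l d < (n + evec r k) d → d ≠ k := fun d => ne_of_lt_add_evec hlk
  have hbelow₀ : 0 ≤ l - evec r k :=
    sub_evec_nonneg hl₀ (by have : (0 : ℤ) ≤ n k := hu.1 k; omega)
  have hbelow : ∀ d, l d < (n + evec r k) d → l - evec r k + evec r d ≤ n := fun d hd => by
    rw [← add_sub_right_comm, sub_le_iff_le_add]
    exact add_evec_le hl hd
  by_cases htop : ∃ d, l d < (n + evec r k) d
  · have IH : ∀ d, l d < (n + evec r k) d →
        M k (w (l + evec r d)) (u (l + evec r d - evec r k)) = 1 ∧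
          ∀ d', (l + evec r d) d' < (n + evec r k) d' →
            M d' (w (l + evec r d + evec r d')) (w (l + evec r d)) = 1 :=
      fun d hd => faceFill_spec h1c hu ht (l + evec r d) (add_nonneg hl₀ (evec_nonneg d))
        (add_evec_le hl hd) (by rwa [add_evec_apply_of_ne _ (hne d hd).symm])
    set d₀ := htop.choose
    have hd₀ : l d₀ < (n + evec r k) d₀ := htop.choose_spec
    have hsq : ∃ c, M k c (u (l - evec r k)) = 1 ∧ M d₀ (w (l + evec r d₀)) c = 1 :=
      exists_square hM h1a (hu.2 _ d₀ hbelow₀ (hbelow d₀ hd₀))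
        (add_sub_right_comm l (evec r d₀) (evec r k) ▸ (IH d₀ hd₀).1)
    have hw : w l = hsq.choose := by
      simp only [w]; rw [faceFill, dif_pos htop, dif_pos hsq]
    obtain ⟨hk, hd₀'⟩ := hsq.choose_spec
    rw [← hw] at hk hd₀'
    refine ⟨hk, fun d hd => ?_⟩
    rcases eq_or_ne d d₀ with rfl | hdd
    · exact hd₀'
    exact edge_of_cube hM h1a h1c hdd.symm (hne d hd) (hne d₀ hd₀) hk hd₀'
      ((IH d₀ hd₀).2 d (by rwa [add_evec_apply_of_ne _ hdd])) (hu.2 _ d hbelow₀ (hbelow d hd))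
      (add_sub_right_comm l (evec r d) (evec r k) ▸ (IH d hd).1)
      (add_right_comm l (evec r d) (evec r d₀) ▸ (IH d hd).2 d₀
        (by rwa [add_evec_apply_of_ne _ hdd.symm]))
  · have hl : l = n + evec r k := eq_of_le_of_not_exists_lt hl htop
    have hw : w l = t := hl ▸ faceFill_self M k _ u t
    refine ⟨by rwa [hw, hl, add_sub_cancel_right], fun d hd => absurd ⟨d, hd⟩ htop⟩
termination_by stepsTo (n + evec r k) l
decreasing_by exact stepsTo_add_evec_lt hd

theorem exists_extension (h1c : H1c M) {k : Fin r} {n : Fin r → ℤ} {u : (Fin r → ℤ) → A}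
    {t : A} (hu : IsWord M n u) (ht : M k t (u n) = 1) :
    ∃ w, IsWord M (n + evec r k) w ∧ AgreeOn n w u ∧ w (n + evec r k) = t := by
  set fill := faceFill M k (n + evec r k) u t
  have spec := faceFill_spec hM h1a h1c hu ht
  refine ⟨fun l => if l k = n k + 1 then fill l else u l,
    ⟨add_nonneg hu.1 (evec_nonneg k), fun l d hl₀ hle => ?_⟩, fun l _ hl => ?_, ?_⟩
  · have hl : l ≤ n + evec r k := le_trans (le_add_of_nonneg_right (evec_nonneg d)) hle
    have hd : l d < (n + evec r k) d := by
      have : (l + evec r d) d ≤ (n + evec r k) d := hle d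
      rw [add_evec_apply_self] at this; omega
    dsimp only
    by_cases hlk : l k = n k + 1
    · have hdk : d ≠ k := ne_of_lt_add_evec hlk hd
      rw [if_pos hlk, if_pos (by rwa [add_evec_apply_of_ne _ hdk.symm])]
      exact (spec l hl₀ hl hlk).2 d hd
    rw [if_neg hlk]
    by_cases hlk' : (l + evec r d) k = n k + 1
    · obtain rfl : d = k := by
        by_contra hdk; rw [add_evec_apply_of_ne _ (Ne.symm hdk)] at hlk'; exact hlk hlk'
      rw [if_pos hlk']
      simpa only [add_sub_cancel_right] using (spec _ (add_nonneg hl₀ (evec_nonneg d)) hle hlk').1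
    · rw [if_neg hlk']
      exact hu.2 l d hl₀ (le_of_le_add_evec hle hlk')
  · have : l k ≤ n k := hl k
    exact if_neg (by omega)
  · exact (if_pos (add_evec_apply_self n k)).trans (faceFill_self M k _ u t)

theorem agreeOn_add_evec (h1b : H1b M) {k : Fin r} {n : Fin r → ℤ} {w w' : (Fin r → ℤ) → A}
    (hn : 0 ≤ n) (hw : IsWord M (n + evec r k) w) (hw' : IsWord M (n + evec r k) w')
    (h : AgreeOn n w w') (htop : w (n + evec r k) = w' (n + evec r k)) :
    AgreeOn (n + evec r k) w w' := by
  intro l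
  induction hN : stepsTo (n + evec r k) l using Nat.strong_induction_on generalizing l with
  | _ N ih =>
  intro hl₀ hl
  by_cases hlk : l k = n k + 1
  · by_cases htop' : ∃ d, l d < (n + evec r k) d
    · obtain ⟨d, hd⟩ := htop'
      have hdk : d ≠ k := ne_of_lt_add_evec hlk hd
      have hup : w (l + evec r d) = w' (l + evec r d) :=
        ih _ (hN ▸ stepsTo_add_evec_lt hd) _ rfl (add_nonneg hl₀ (evec_nonneg d))
          (add_evec_le hl hd)
      have hbelow₀ : 0 ≤ l - evec r k := sub_evec_nonneg hl₀ (by have : 0 ≤ n k := hn k; omega)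
      have hdown : w (l - evec r k) = w' (l - evec r k) :=
        h _ hbelow₀ (sub_le_iff_le_add.2 hl)
      have edges : ∀ v : (Fin r → ℤ) → A, IsWord M (n + evec r k) v →
          M k (v l) (v (l - evec r k)) = 1 ∧ M d (v (l + evec r d)) (v l) = 1 := fun v hv =>
        ⟨by simpa only [sub_add_cancel] using hv.2 _ k hbelow₀ (by rwa [sub_add_cancel]),
          hv.2 l d hl₀ (add_evec_le hl hd)⟩
      have e := edges w' hw'
      rw [← hdown, ← hup] at e
      exact square_unique hM h1a h1b hdk (edges w hw) e
    · rw [eq_of_le_of_not_exists_lt hl htop']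
      exact htop
  · exact h l hl₀ (le_of_le_add_evec hl hlk)

end Extension

/-- `stairPoint j i = e_{j_1} + ⋯ + e_{j_i}`, the paper's `j_{i'+1}` being `j i'`. -/
def stairPoint {p : ℕ} (j : Fin p → Fin r) (i : ℕ) : Fin r → ℤ :=
  ∑ i' ∈ Finset.univ.filter (fun i' : Fin p => (i' : ℕ) < i), evec r (j i')

section Stair

variable {p : ℕ}

lemma stairPoint_nonneg (j : Fin p → Fin r) (i : ℕ) : 0 ≤ stairPoint j i :=
  Finset.sum_nonneg fun _ _ => evec_nonneg _

lemma stairPoint_le (j : Fin p → Fin r) (i : ℕ) : stairPoint j i ≤ ∑ i', evec r (j i') :=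
  Finset.sum_le_sum_of_subset_of_nonneg (Finset.filter_subset _ _) fun _ _ _ => evec_nonneg _

lemma stairPoint_of_le (j : Fin p → Fin r) {i : ℕ} (hi : p ≤ i) :
    stairPoint j i = ∑ i', evec r (j i') := by
  rw [stairPoint, Finset.filter_true_of_mem fun i' _ => i'.isLt.trans_le hi]

lemma stairPoint_castSucc (j : Fin (p + 1) → Fin r) {i : ℕ} (hi : i ≤ p) :
    stairPoint j i = stairPoint (fun i' => j i'.castSucc) i := by
  rw [stairPoint, stairPoint, Finset.sum_filter, Finset.sum_filter, Fin.sum_univ_castSucc]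
  simp only [Fin.val_castSucc, Fin.val_last, if_neg (not_lt.2 hi), add_zero]

lemma forall_stairPoint_succ_iff (j : Fin (p + 1) → Fin r)
    (P : (Fin r → ℤ) → Fin (p + 2) → Prop) :
    (∀ i : Fin (p + 2), P (stairPoint j i) i) ↔
      (∀ i : Fin (p + 1), P (stairPoint (fun i' => j i'.castSucc) i) i.castSucc) ∧
        P (∑ i, evec r (j i)) (Fin.last _) := by
  rw [Fin.forall_fin_succ', Fin.val_last, stairPoint_of_le j le_rfl]
  refine and_congr (forall_congr' fun i => ?_) Iff.rfl
  rw [Fin.val_castSucc, stairPoint_castSucc j (Nat.lt_succ_iff.1 i.isLt)]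

variable [Fintype A] {M : Fin r → Matrix A A ℤ}
  (hM : ∀ j (a b : A), M j b a = 0 ∨ M j b a = 1) (h1a : H1a M)
include hM h1a

theorem exists_isWord_stairPoint (h1c : H1c M) (j : Fin p → Fin r) (a : Fin (p + 1) → A)
    (ha : ∀ i : Fin p, M (j i) (a i.succ) (a i.castSucc) = 1) :
    ∃ w, IsWord M (∑ i, evec r (j i)) w ∧ ∀ i : Fin (p + 1), w (stairPoint j i) = a i := by
  induction p with
  | zero =>
    exact ⟨fun _ => a 0, by simpa using isWord_zero M _,
      fun i => congrArg a (Fin.fin_one_eq_zero i).symm⟩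
  | succ p ih =>
    obtain ⟨w', hw', hw'a⟩ := ih (fun i => j i.castSucc) (fun i => a i.castSucc)
      fun i => Fin.succ_castSucc i ▸ ha i.castSucc
    have htop : w' (∑ i : Fin p, evec r (j i.castSucc)) = a (Fin.last p).castSucc := by
      simpa only [Fin.val_last, stairPoint_of_le _ le_rfl] using hw'a (Fin.last p)
    obtain ⟨w, hw, hww', hwtop⟩ := exists_extension hM h1a h1c hw' (htop ▸ ha (Fin.last p))
    rw [← Fin.sum_univ_castSucc (fun i => evec r (j i))] at hw hwtop
    rw [Fin.succ_last] at hwtop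
    refine ⟨w, hw, (forall_stairPoint_succ_iff j fun x i => w x = a i).2 ⟨fun i => ?_, hwtop⟩⟩
    exact (hww' _ (stairPoint_nonneg _ _) (stairPoint_le _ _)).trans (hw'a i)

theorem agreeOn_of_stairPoint (h1b : H1b M) (j : Fin p → Fin r) {w w' : (Fin r → ℤ) → A}
    (hw : IsWord M (∑ i, evec r (j i)) w) (hw' : IsWord M (∑ i, evec r (j i)) w')
    (h : ∀ i : Fin (p + 1), w (stairPoint j i) = w' (stairPoint j i)) :
    AgreeOn (∑ i, evec r (j i)) w w' := by
  induction p with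
  | zero =>
    intro l hl₀ hl
    obtain rfl : l = 0 := le_antisymm (by simpa using hl) hl₀
    simpa [stairPoint] using h 0
  | succ p ih =>
    have hsum := Fin.sum_univ_castSucc (fun i => evec r (j i))
    have hle : ∑ i : Fin p, evec r (j i.castSucc) ≤ ∑ i, evec r (j i) :=
      hsum ▸ le_add_of_nonneg_right (evec_nonneg _)
    have hnn : 0 ≤ ∑ i : Fin p, evec r (j i.castSucc) := Finset.sum_nonneg fun _ _ => evec_nonneg _
    obtain ⟨hinit, htop⟩ := (forall_stairPoint_succ_iff j fun x _ => w x = w' x).1 h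
    have hagree := ih (fun i => j i.castSucc) (hw.mono hnn hle) (hw'.mono hnn hle) hinit
    rw [hsum] at hw hw' htop ⊢
    exact agreeOn_add_evec hM h1a h1b hnn hw hw' hagree htop

end Stair

theorem stmt_3_general [Fintype A]
    (M : Fin r → Matrix A A ℤ)
    (hM : ∀ j (a b : A), M j b a = 0 ∨ M j b a = 1)
    (h1a : H1a M) (h1b : H1b M) (h1c : H1c M)
    (p : ℕ) (j : Fin p → Fin r) (a : Fin (p + 1) → A)
    (ha : ∀ i : Fin p, M (j i) (a i.succ) (a i.castSucc) = 1) :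
    ∃ w : (Fin r → ℤ) → A,
      (IsWord M (∑ i : Fin p, evec r (j i)) w ∧
        ∀ i : Fin (p + 1),
          w (∑ i' ∈ Finset.univ.filter (fun i' : Fin p => (i' : ℕ) < (i : ℕ)),
              evec r (j i')) = a i) ∧
      ∀ w' : (Fin r → ℤ) → A, IsWord M (∑ i : Fin p, evec r (j i)) w' →
        (∀ i : Fin (p + 1),
          w' (∑ i' ∈ Finset.univ.filter (fun i' : Fin p => (i' : ℕ) < (i : ℕ)),
              evec r (j i')) = a i) →
        AgreeOn (∑ i : Fin p, evec r (j i)) w w' := by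
  obtain ⟨w, hw, hwa⟩ := exists_isWord_stairPoint hM h1a h1c j a ha
  exact ⟨w, ⟨hw, hwa⟩, fun w' hw' hw'a =>
    agreeOn_of_stairPoint hM h1a h1b j hw hw' fun i => (hwa i).trans (hw'a i).symm⟩

/-- under (H1a), (H1b), (H1c), a chain of transitions
`M (j i) (a i) (a (i-1)) = 1` determines a unique word `w` of shape
`e_{j_1} + ⋯ + e_{j_p}` with `w(e_{j_1} + ⋯ + e_{j_i}) = a i` for all `i`. -/
theorem stmt_3 [Fintype A] [Nonempty A] (hr : 0 < r)
    (M : Fin r → Matrix A A ℤ)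
    (hM : ∀ j (a b : A), M j b a = 0 ∨ M j b a = 1)
    (h1a : H1a M) (h1b : H1b M) (h1c : H1c M)
    (p : ℕ) (j : Fin p → Fin r) (a : Fin (p + 1) → A)
    (ha : ∀ i : Fin p, M (j i) (a i.succ) (a i.castSucc) = 1) :
    ∃ w : (Fin r → ℤ) → A,
      (IsWord M (∑ i : Fin p, evec r (j i)) w ∧
        ∀ i : Fin (p + 1),
          w (∑ i' ∈ Finset.univ.filter (fun i' : Fin p => (i' : ℕ) < (i : ℕ)),
              evec r (j i')) = a i) ∧
      ∀ w' : (Fin r → ℤ) → A, IsWord M (∑ i : Fin p, evec r (j i)) w' →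
        (∀ i : Fin (p + 1),
          w' (∑ i' ∈ Finset.univ.filter (fun i' : Fin p => (i' : ℕ) < (i : ℕ)),
              evec r (j i')) = a i) →
        AgreeOn (∑ i : Fin p, evec r (j i)) w w' :=
  stmt_3_general M hM h1a h1b h1c p j a ha
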